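/- Concentration of the empirical norm of a fixed matrix around its L2(Π) norm: For any fixed matrix A ∈ ℝ^{m1×m2} with ‖A‖_∞ ≤ 2a and any t > 0, P( |‖𝒳(A)‖₂ − ‖A‖_{L2(Π)}| > t + 48a ) ≤ 4·exp( −t²/(8a²) ). -/

import Mathlib

open MeasureTheory ProbabilityTheory

/-- Squared Frobenius norm of a real matrix. -/
noncomputable def frob2 {m1 m2 : ℕ} (A : Matrix (Fin m1) (Fin m2) ℝ) : ℝ :=
  ∑ i, ∑ j, (A i j) ^ 2

/-- Frobenius norm of a real matrix. -/
noncomputable def frob {m1 m2 : ℕ} (A : Matrix (Fin m1) (Fin m2) ℝ) : ℝ :=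
  Real.sqrt (frob2 A)

/-- `(Aᵀ * A)` is Hermitian for a real matrix (lemma removed from Mathlib). -/
theorem Matrix.isHermitian_transpose_mul_self {m1 m2 : ℕ} (A : Matrix (Fin m1) (Fin m2) ℝ) :
    (A.transpose * A).IsHermitian := by
  simpa using Matrix.isHermitian_conjTranspose_mul_self A

/-- Nuclear (trace) norm of a real matrix: sum of its singular values. -/
noncomputable def nucNorm {m1 m2 : ℕ} (A : Matrix (Fin m1) (Fin m2) ℝ) : ℝ :=
  ∑ i, Real.sqrt ((Matrix.isHermitian_transpose_mul_self A).eigenvalues i)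

/-- Operator (spectral) norm of a real matrix. -/
noncomputable def opNorm {m1 m2 : ℕ} (A : Matrix (Fin m1) (Fin m2) ℝ) : ℝ :=
  ⨆ v : {v : Fin m2 → ℝ // ∑ j, (v j) ^ 2 ≤ 1}, Real.sqrt (∑ i, (A.mulVec v.1 i) ^ 2)

/-- Matrix scalar product ⟨A,B⟩ = tr(AᵀB). -/
noncomputable def mdot {m1 m2 : ℕ} (A B : Matrix (Fin m1) (Fin m2) ℝ) : ℝ :=
  ∑ i, ∑ j, A i j * B i j

/-- Entrywise multiplication by a realized sampling pattern `B0`; this models the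
observation operator 𝒳 for one realization of the Bernoulli masks. -/
noncomputable def hadB {m1 m2 : ℕ} (B0 A : Matrix (Fin m1) (Fin m2) ℝ) :
    Matrix (Fin m1) (Fin m2) ℝ :=
  Matrix.of fun i j => B0 i j * A i j

/-- The entries of `B` are i.i.d. Bernoulli(p) random variables (taking values 0/1). -/
def IsBernoulliMatrix {m1 m2 : ℕ} {Ω : Type} [MeasurableSpace Ω] (P : Measure Ω)
    (B : Ω → Matrix (Fin m1) (Fin m2) ℝ) (p : ℝ) : Prop :=
  (∀ i j, Measurable fun ω => B ω i j) ∧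
  (∀ ω i j, B ω i j = 0 ∨ B ω i j = 1) ∧
  (∀ i j, P {ω | B ω i j = 1} = ENNReal.ofReal p) ∧
  iIndepFun (fun q : Fin m1 × Fin m2 => fun ω => B ω q.1 q.2) P

/-- The noise entries are measurable, centered, with variance σ², and bounded by U a.s. -/
def IsBoundedNoise {m1 m2 : ℕ} {Ω : Type} [MeasurableSpace Ω] (P : Measure Ω)
    (E : Ω → Matrix (Fin m1) (Fin m2) ℝ) (σ U : ℝ) : Prop :=
  (∀ i j, Measurable fun ω => E ω i j) ∧
  (∀ i j, ∫ ω, E ω i j ∂P = 0) ∧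
  (∀ i j, ∫ ω, (E ω i j) ^ 2 ∂P = σ ^ 2) ∧
  (∀ i j, ∀ᵐ ω ∂P, |E ω i j| ≤ U)

/-- The entries of `e` are Rademacher (±1, fair) random variables. -/
def IsRademacherMatrix {m1 m2 : ℕ} {Ω : Type} [MeasurableSpace Ω] (P : Measure Ω)
    (e : Ω → Matrix (Fin m1) (Fin m2) ℝ) : Prop :=
  (∀ i j, Measurable fun ω => e ω i j) ∧
  (∀ ω i j, e ω i j = 1 ∨ e ω i j = -1) ∧
  (∀ i j, P {ω | e ω i j = 1} = 1 / 2)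

/-- The entries of `B` and `E` together form an independent family. -/
def JointlyIndep {m1 m2 : ℕ} {Ω : Type} [MeasurableSpace Ω] (P : Measure Ω)
    (B E : Ω → Matrix (Fin m1) (Fin m2) ℝ) : Prop :=
  iIndepFun
    (Sum.elim (fun q : Fin m1 × Fin m2 => fun ω => B ω q.1 q.2)
              (fun q : Fin m1 × Fin m2 => fun ω => E ω q.1 q.2)) P

/-- The class 𝒞(k,a): rank ≤ k, sup-norm ≤ a, and ‖M0−A‖₂² ≥ 256(a∨U)²zd/p. -/
def classC {m1 m2 : ℕ} (M0 : Matrix (Fin m1) (Fin m2) ℝ) (a U z p : ℝ) (k : ℕ) :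
    Set (Matrix (Fin m1) (Fin m2) ℝ) :=
  {A | (∀ i j, |A i j| ≤ a) ∧ 256 * (max a U) ^ 2 * z * (m1 + m2) / p ≤ frob2 (M0 - A) ∧
    A.rank ≤ k}

/-- 𝒞 = ∪_{k=1}^m 𝒞(k,a). -/
def classCfull {m1 m2 : ℕ} (M0 : Matrix (Fin m1) (Fin m2) ℝ) (a U z p : ℝ) :
    Set (Matrix (Fin m1) (Fin m2) ℝ) :=
  ⋃ k ∈ Finset.Icc 1 (min m1 m2), classC M0 a U z p k

/-- 𝒞(k,a,T) = {A ∈ 𝒞(k,a) : ‖M0−A‖₂ ≤ T}. -/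
def classCT {m1 m2 : ℕ} (M0 : Matrix (Fin m1) (Fin m2) ℝ) (a U z p : ℝ) (k : ℕ) (T : ℝ) :
    Set (Matrix (Fin m1) (Fin m2) ℝ) :=
  {A | A ∈ classC M0 a U z p k ∧ frob (M0 - A) ≤ T}

/-- 𝒟_δ(k,a,T) = {A : ‖A‖_∞ ≤ a, ‖A‖₂ ≤ δ, ‖A‖_* ≤ √k·T}. -/
def classD {m1 m2 : ℕ} (k : ℕ) (a δ T : ℝ) : Set (Matrix (Fin m1) (Fin m2) ℝ) :=
  {A | (∀ i j, |A i j| ≤ a) ∧ frob A ≤ δ ∧ nucNorm A ≤ Real.sqrt k * T}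


/-!
Write `S = ∑ B_ij A_ij²`, so that `‖𝒳(A)‖₂ = √S` and `‖A‖_{L2(Π)} = √(E S)`. The summands are
independent Bernoulli variables weighted by `c_ij = A_ij² ∈ [0, M]`, `M = 4a²`, and the elementary
bounds `eˣ ≤ 1 + x + x²` on `[0, 1]` and `e⁻ˣ ≤ 1 - x + x²/2` on `[0, ∞)` give Bernstein-type
bounds on their moment generating function in which the variance proxy is `M · E S`. Chernoff's
bound then controls `S ≥ (√(E S) + τ)²` and `S ≤ (√(E S) - τ)²` by `exp (-τ²/(2M))` each; for
`τ = t + 48a` this is more than the theorem asks for.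
-/

open Real Finset

theorem Real.exp_neg_le_one_sub_add_sq_div_two {x : ℝ} (hx : 0 ≤ x) :
    exp (-x) ≤ 1 - x + x ^ 2 / 2 := by
  have htaylor := Real.sum_le_exp_of_nonneg hx 4
  simp only [sum_range_succ, sum_range_zero, Nat.factorial] at htaylor
  norm_num at htaylor
  rw [exp_neg, inv_le_iff_one_le_mul₀ (exp_pos x)]
  -- `(1 - x + x²/2) (1 + x + x²/2 + x³/6) = 1 + x³/6 + x⁴/12 + x⁵/12`
  nlinarith [pow_nonneg hx 3, pow_nonneg hx 4, pow_nonneg hx 5,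
    mul_le_mul_of_nonneg_left htaylor (by nlinarith : (0 : ℝ) ≤ 1 - x + x ^ 2 / 2)]

theorem mul_sum_exp_mul_sub_one_le {ι : Type*} [Fintype ι] {c : ι → ℝ} {p t v M : ℝ}
    (hp : 0 ≤ p) (hv : 0 ≤ v) (hc0 : ∀ i, 0 ≤ c i) (hcM : ∀ i, c i ≤ M)
    (hexp : ∀ i, exp (t * c i) ≤ 1 + t * c i + v * (t * c i) ^ 2) :
    p * ∑ i, (exp (t * c i) - 1) ≤ (t + v * t ^ 2 * M) * (p * ∑ i, c i) := by
  have hterm : ∀ i, exp (t * c i) - 1 ≤ (t + v * t ^ 2 * M) * c i := fun i => by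
    have hsq : c i ^ 2 ≤ M * c i := by nlinarith [hc0 i, hcM i]
    nlinarith [hexp i, mul_le_mul_of_nonneg_left hsq (by positivity : 0 ≤ v * t ^ 2)]
  calc p * ∑ i, (exp (t * c i) - 1) ≤ p * ∑ i, (t + v * t ^ 2 * M) * c i :=
        mul_le_mul_of_nonneg_left (sum_le_sum fun i _ => hterm i) hp
    _ = (t + v * t ^ 2 * M) * (p * ∑ i, c i) := by rw [← mul_sum]; ring

theorem Real.add_sq_le_or_le_sub_sq_of_lt_abs_sqrt_sub {x y τ : ℝ} (hy : 0 ≤ y) (hτ : 0 ≤ τ)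
    (h : τ < |√x - y|) : (y + τ) ^ 2 ≤ x ∨ τ < y ∧ x ≤ (y - τ) ^ 2 := by
  rcases lt_abs.1 h with hup | hlow
  · exact Or.inl ((lt_sqrt (by positivity)).1 (by linarith)).le
  · have hτy : τ < y := by linarith [sqrt_nonneg x]
    exact Or.inr ⟨hτy, ((sqrt_lt' (by linarith)).1 (by linarith)).le⟩

open MeasureTheory ProbabilityTheory

structure IsBernoulliFamily {ι Ω : Type*} [MeasurableSpace Ω] (P : Measure Ω)
    (X : ι → Ω → ℝ) (p : ℝ) : Prop where
  measurable : ∀ i, Measurable (X i)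
  eq_zero_or_eq_one : ∀ i ω, X i ω = 0 ∨ X i ω = 1
  measure_eq_one : ∀ i, P {ω | X i ω = 1} = ENNReal.ofReal p
  indep : iIndepFun X P

theorem IsBernoulliMatrix.isBernoulliFamily {m1 m2 : ℕ} {Ω : Type} [MeasurableSpace Ω]
    {P : Measure Ω} {B : Ω → Matrix (Fin m1) (Fin m2) ℝ} {p : ℝ}
    (hB : IsBernoulliMatrix P B p) :
    IsBernoulliFamily P (fun q : Fin m1 × Fin m2 => fun ω => B ω q.1 q.2) p :=
  ⟨fun q => hB.1 q.1 q.2, fun q ω => hB.2.1 ω q.1 q.2, fun q => hB.2.2.1 q.1 q.2, hB.2.2.2⟩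

namespace IsBernoulliFamily

variable {ι Ω : Type*} [MeasurableSpace Ω] {P : Measure Ω} {X : ι → Ω → ℝ} {p : ℝ}

theorem integral_eq (h : IsBernoulliFamily P X p) (hp : 0 ≤ p) (i : ι) :
    ∫ ω, X i ω ∂P = p := by
  have hind : X i = Set.indicator {ω | X i ω = 1} 1 := by
    ext ω
    rcases h.eq_zero_or_eq_one i ω with h0 | h1
    · simp [h0]
    · simp [h1]
  have hs : MeasurableSet {ω | X i ω = 1} := h.measurable i (measurableSet_singleton 1)
  rw [hind, integral_indicator_one hs, measureReal_def, h.measure_eq_one i, ENNReal.toReal_ofReal hp]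

theorem mgf_const_mul [IsProbabilityMeasure P] (h : IsBernoulliFamily P X p) (hp : 0 ≤ p)
    (c t : ℝ) (i : ι) :
    mgf (fun ω => c * X i ω) P t = 1 + p * (exp (t * c) - 1) := by
  have hlin : (fun ω => exp (t * (c * X i ω))) = fun ω => 1 + (exp (t * c) - 1) * X i ω := by
    ext ω
    rcases h.eq_zero_or_eq_one i ω with h0 | h1
    · simp [h0]
    · simp [h1]
  have hint : Integrable (X i) P :=
    .of_mem_Icc 0 1 (h.measurable i).aemeasurable <| ae_of_all _ fun ω => by
      rcases h.eq_zero_or_eq_one i ω with h0 | h1 <;> simp [*]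
  rw [mgf, hlin, integral_add (integrable_const 1) (hint.const_mul _), integral_const_mul,
    h.integral_eq hp]
  simp [mul_comm]

variable [Fintype ι]

theorem mgf_sum_le [IsProbabilityMeasure P] (h : IsBernoulliFamily P X p) (hp : 0 ≤ p)
    (c : ι → ℝ) (t : ℝ) :
    mgf (fun ω => ∑ i, c i * X i ω) P t ≤ exp (p * ∑ i, (exp (t * c i) - 1)) := by
  have hsum : (fun ω => ∑ i, c i * X i ω) = ∑ i, fun ω => c i * X i ω := by
    ext ω; simp
  have hindep : iIndepFun (fun i ω => c i * X i ω) P :=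
    h.indep.comp (fun i x => c i * x) fun i => measurable_const_mul (c i)
  rw [hsum, hindep.mgf_sum fun i => (h.measurable i).const_mul (c i), mul_sum, exp_sum]
  refine prod_le_prod (fun i _ => mgf_nonneg) fun i _ => ?_
  rw [h.mgf_const_mul hp]
  linarith [add_one_le_exp (p * (exp (t * c i) - 1))]

theorem integrable_exp_mul_sum [IsProbabilityMeasure P] (h : IsBernoulliFamily P X p)
    (c : ι → ℝ) (t : ℝ) :
    Integrable (fun ω => exp (t * ∑ i, c i * X i ω)) P := by
  refine integrable_exp_mul_of_mem_Icc (a := -∑ i, |c i|) (b := ∑ i, |c i|)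
    (Finset.measurable_sum _ fun i _ => (h.measurable i).const_mul (c i)).aemeasurable
    (ae_of_all _ fun ω => ?_)
  rw [Set.mem_Icc, ← abs_le]
  refine (abs_sum_le_sum_abs _ _).trans (sum_le_sum fun i _ => ?_)
  rcases h.eq_zero_or_eq_one i ω with h0 | h1 <;> simp [*]

theorem measureReal_le_sum_le [IsProbabilityMeasure P] (h : IsBernoulliFamily P X p)
    (hp : 0 ≤ p) {c : ι → ℝ} {M t : ℝ} (hc0 : ∀ i, 0 ≤ c i) (hcM : ∀ i, c i ≤ M)
    (ht : 0 ≤ t) (htM : t * M ≤ 1) (ε : ℝ) :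
    P.real {ω | ε ≤ ∑ i, c i * X i ω} ≤ exp (-t * ε + (t + t ^ 2 * M) * (p * ∑ i, c i)) := by
  have hexp : ∀ i, exp (t * c i) ≤ 1 + t * c i + 1 * (t * c i) ^ 2 := fun i => by
    have htc : |t * c i| ≤ 1 := by
      rw [abs_of_nonneg (mul_nonneg ht (hc0 i))]
      exact (mul_le_mul_of_nonneg_left (hcM i) ht).trans htM
    linarith [(abs_le.1 (abs_exp_sub_one_sub_id_le htc)).2]
  calc P.real {ω | ε ≤ ∑ i, c i * X i ω}
      ≤ exp (-t * ε) * mgf (fun ω => ∑ i, c i * X i ω) P t :=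
        measure_ge_le_exp_mul_mgf ε ht (h.integrable_exp_mul_sum c t)
    _ ≤ exp (-t * ε) * exp ((t + 1 * t ^ 2 * M) * (p * ∑ i, c i)) := by
        gcongr
        exact (h.mgf_sum_le hp c t).trans
          (exp_le_exp.2 (mul_sum_exp_mul_sub_one_le hp zero_le_one hc0 hcM hexp))
    _ = exp (-t * ε + (t + t ^ 2 * M) * (p * ∑ i, c i)) := by rw [← exp_add, one_mul]

theorem measureReal_sum_le_le [IsProbabilityMeasure P] (h : IsBernoulliFamily P X p)
    (hp : 0 ≤ p) {c : ι → ℝ} {M t : ℝ} (hc0 : ∀ i, 0 ≤ c i) (hcM : ∀ i, c i ≤ M)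
    (ht : 0 ≤ t) (ε : ℝ) :
    P.real {ω | ∑ i, c i * X i ω ≤ ε} ≤ exp (t * ε - (t - t ^ 2 * M / 2) * (p * ∑ i, c i)) := by
  have hexp : ∀ i, exp (-t * c i) ≤ 1 + -t * c i + 1 / 2 * (-t * c i) ^ 2 := fun i => by
    have := exp_neg_le_one_sub_add_sq_div_two (mul_nonneg ht (hc0 i))
    rw [neg_mul]
    linarith
  calc P.real {ω | ∑ i, c i * X i ω ≤ ε}
      ≤ exp (-(-t) * ε) * mgf (fun ω => ∑ i, c i * X i ω) P (-t) :=
        measure_le_le_exp_mul_mgf ε (neg_nonpos.2 ht) (h.integrable_exp_mul_sum c (-t))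
    _ ≤ exp (-(-t) * ε) * exp ((-t + 1 / 2 * (-t) ^ 2 * M) * (p * ∑ i, c i)) := by
        gcongr
        exact (h.mgf_sum_le hp c (-t)).trans
          (exp_le_exp.2 (mul_sum_exp_mul_sub_one_le hp (by norm_num) hc0 hcM hexp))
    _ = exp (t * ε - (t - t ^ 2 * M / 2) * (p * ∑ i, c i)) := by
        rw [← exp_add]; congr 1; ring

theorem measureReal_sqrt_add_sq_le_sum_le [IsProbabilityMeasure P] (h : IsBernoulliFamily P X p)
    (hp : 0 ≤ p) {c : ι → ℝ} {M τ : ℝ} (hc0 : ∀ i, 0 ≤ c i) (hcM : ∀ i, c i ≤ M)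
    (hM : 0 < M) (hτ : 0 < τ) :
    P.real {ω | (√(p * ∑ i, c i) + τ) ^ 2 ≤ ∑ i, c i * X i ω} ≤ exp (-τ ^ 2 / (2 * M)) := by
  set y := √(p * ∑ i, c i)
  have hy : 0 ≤ y := sqrt_nonneg _
  have hy2 : y ^ 2 = p * ∑ i, c i := sq_sqrt (mul_nonneg hp (sum_nonneg fun i _ => hc0 i))
  set t := τ / (M * (y + τ))
  have htM : t * M ≤ 1 := by
    rw [div_mul_eq_mul_div, div_le_one (by positivity)]
    nlinarith
  refine (h.measureReal_le_sum_le hp hc0 hcM (by positivity) htM _).trans (exp_le_exp.2 ?_)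
  have hexponent : -t * (y + τ) ^ 2 + (t + t ^ 2 * M) * y ^ 2
      = -(τ ^ 2 / M) * ((y ^ 2 + 3 * y * τ + τ ^ 2) / (y + τ) ^ 2) := by
    simp only [t]; field_simp; ring
  have hratio : 1 ≤ (y ^ 2 + 3 * y * τ + τ ^ 2) / (y + τ) ^ 2 := by
    rw [one_le_div (by positivity)]; nlinarith
  rw [← hy2, hexponent, neg_div, neg_mul, neg_le_neg_iff]
  calc τ ^ 2 / (2 * M) ≤ τ ^ 2 / M := by gcongr; linarith
    _ ≤ τ ^ 2 / M * ((y ^ 2 + 3 * y * τ + τ ^ 2) / (y + τ) ^ 2) :=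
        le_mul_of_one_le_right (by positivity) hratio

theorem measureReal_sum_le_sqrt_sub_sq_le [IsProbabilityMeasure P] (h : IsBernoulliFamily P X p)
    (hp : 0 ≤ p) {c : ι → ℝ} {M τ : ℝ} (hc0 : ∀ i, 0 ≤ c i) (hcM : ∀ i, c i ≤ M)
    (hM : 0 < M) (hτ : 0 < τ) (hτμ : τ < √(p * ∑ i, c i)) :
    P.real {ω | ∑ i, c i * X i ω ≤ (√(p * ∑ i, c i) - τ) ^ 2} ≤ exp (-τ ^ 2 / (2 * M)) := by
  set y := √(p * ∑ i, c i)
  have hy : 0 < y := hτ.trans hτμ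
  have hy2 : y ^ 2 = p * ∑ i, c i := sq_sqrt (mul_nonneg hp (sum_nonneg fun i _ => hc0 i))
  refine (h.measureReal_sum_le_le hp hc0 hcM (t := τ / (M * y)) (by positivity) _).trans
    (exp_le_exp.2 ?_)
  have hexponent : τ / (M * y) * (y - τ) ^ 2 - (τ / (M * y) - (τ / (M * y)) ^ 2 * M / 2) * y ^ 2
      = -τ ^ 2 / (2 * M) - τ ^ 2 * (y - τ) / (M * y) := by
    field_simp; ring
  rw [← hy2, hexponent, sub_le_self_iff]
  have : 0 < y - τ := sub_pos.2 hτμ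
  positivity

theorem measureReal_lt_abs_sqrt_sum_sub_le [IsProbabilityMeasure P] (h : IsBernoulliFamily P X p)
    (hp : 0 ≤ p) {c : ι → ℝ} {M τ : ℝ} (hc0 : ∀ i, 0 ≤ c i) (hcM : ∀ i, c i ≤ M)
    (hM : 0 < M) (hτ : 0 < τ) :
    P.real {ω | τ < |√(∑ i, c i * X i ω) - √(p * ∑ i, c i)|} ≤ 2 * exp (-τ ^ 2 / (2 * M)) := by
  set y := √(p * ∑ i, c i)
  set S := fun ω => ∑ i, c i * X i ω
  have hlow : P.real {ω | τ < y ∧ S ω ≤ (y - τ) ^ 2} ≤ exp (-τ ^ 2 / (2 * M)) := by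
    by_cases hτy : τ < y
    · simpa only [hτy, true_and] using
        h.measureReal_sum_le_sqrt_sub_sq_le hp hc0 hcM hM hτ hτy
    · simp only [hτy, false_and, Set.ofPred_false, measureReal_empty]
      positivity
  calc P.real {ω | τ < |√(S ω) - y|}
      ≤ P.real ({ω | (y + τ) ^ 2 ≤ S ω} ∪ {ω | τ < y ∧ S ω ≤ (y - τ) ^ 2}) :=
        measureReal_mono fun ω hω =>
          Real.add_sq_le_or_le_sub_sq_of_lt_abs_sqrt_sub (sqrt_nonneg _) hτ.le hω
    _ ≤ P.real {ω | (y + τ) ^ 2 ≤ S ω} + P.real {ω | τ < y ∧ S ω ≤ (y - τ) ^ 2} :=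
        measureReal_union_le _ _
    _ ≤ 2 * exp (-τ ^ 2 / (2 * M)) := by
        linarith [h.measureReal_sqrt_add_sq_le_sum_le hp hc0 hcM hM hτ]

end IsBernoulliFamily

theorem frob_hadB_eq_sqrt_sum {m1 m2 : ℕ} {B0 : Matrix (Fin m1) (Fin m2) ℝ}
    (hB0 : ∀ i j, B0 i j = 0 ∨ B0 i j = 1) (A : Matrix (Fin m1) (Fin m2) ℝ) :
    frob (hadB B0 A) = √(∑ q : Fin m1 × Fin m2, A q.1 q.2 ^ 2 * B0 q.1 q.2) := by
  rw [frob, frob2, Fintype.sum_prod_type]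
  congr 1
  refine sum_congr rfl fun i _ => sum_congr rfl fun j _ => ?_
  rcases hB0 i j with h0 | h1
  · simp [hadB, h0]
  · simp [hadB, h1]

theorem sqrt_mul_frob {m1 m2 : ℕ} {p : ℝ} (hp : 0 ≤ p) (A : Matrix (Fin m1) (Fin m2) ℝ) :
    √p * frob A = √(p * ∑ q : Fin m1 × Fin m2, A q.1 q.2 ^ 2) := by
  rw [frob, frob2, ← Fintype.sum_prod_type', sqrt_mul hp]

theorem empirical_norm_concentration_general (m1 m2 n : ℕ) (a p : ℝ)
    (Ω : Type) [MeasurableSpace Ω] (P : Measure Ω) [IsProbabilityMeasure P]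
    (B : Ω → Matrix (Fin m1) (Fin m2) ℝ)
    (hp : p = (n : ℝ) / (m1 * m2)) (ha : 0 < a)
    (hB : IsBernoulliMatrix P B p)
    (A : Matrix (Fin m1) (Fin m2) ℝ) (hA : ∀ i j, |A i j| ≤ 2 * a)
    (t : ℝ) (ht : 0 < t) :
    P {ω | t + 48 * a < |frob (hadB (B ω) A) - Real.sqrt p * frob A|} ≤
      ENNReal.ofReal (4 * Real.exp (-t ^ 2 / (8 * a ^ 2))) := by
  have hp0 : 0 ≤ p := hp ▸ by positivity
  have hcM : ∀ q : Fin m1 × Fin m2, A q.1 q.2 ^ 2 ≤ 4 * a ^ 2 := fun q => by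
    nlinarith [sq_abs (A q.1 q.2), abs_nonneg (A q.1 q.2), hA q.1 q.2]
  have htail := hB.isBernoulliFamily.measureReal_lt_abs_sqrt_sum_sub_le hp0
    (fun q => sq_nonneg (A q.1 q.2)) hcM (by positivity) (τ := t + 48 * a) (by positivity)
  have hexp : exp (-(t + 48 * a) ^ 2 / (2 * (4 * a ^ 2))) ≤ exp (-t ^ 2 / (8 * a ^ 2)) := by
    rw [exp_le_exp, show 2 * (4 * a ^ 2) = 8 * a ^ 2 by ring]
    gcongr
    nlinarith
  rw [← ofReal_measureReal]
  refine ENNReal.ofReal_le_ofReal (le_trans (le_of_eq ?_) (htail.trans (by linarith [exp_pos (-t ^ 2 / (8 * a ^ 2))])))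
  congr 1
  ext ω
  simp only [Set.mem_ofPred_eq, frob_hadB_eq_sqrt_sum (hB.2.1 ω), sqrt_mul_frob hp0]

/-- Concentration of the empirical norm ‖𝒳(A)‖₂ of a fixed matrix A (with ‖A‖_∞ ≤ 2a)
around its L2(Π)-norm √p‖A‖₂: P(|‖𝒳(A)‖₂ − ‖A‖_{L2(Π)}| > t + 48a) ≤ 4exp(−t²/(8a²)). -/
theorem empirical_norm_concentration (m1 m2 n : ℕ) (a p : ℝ)
    (Ω : Type) [MeasurableSpace Ω] (P : Measure Ω) [IsProbabilityMeasure P]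
    (B : Ω → Matrix (Fin m1) (Fin m2) ℝ)
    (hm1 : 0 < m1) (hm2 : 0 < m2) (hn : 0 < n) (hnle : n ≤ m1 * m2)
    (hp : p = (n : ℝ) / (m1 * m2)) (ha : 0 < a)
    (hB : IsBernoulliMatrix P B p)
    (A : Matrix (Fin m1) (Fin m2) ℝ) (hA : ∀ i j, |A i j| ≤ 2 * a)
    (t : ℝ) (ht : 0 < t) :
    P {ω | t + 48 * a < |frob (hadB (B ω) A) - Real.sqrt p * frob A|} ≤
      ENNReal.ofReal (4 * Real.exp (-t ^ 2 / (8 * a ^ 2))) :=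
  empirical_norm_concentration_general m1 m2 n a p Ω P B hp ha hB A hA t ht
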